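/- arXiv:1412.0642 — 2 statements merged into one kernel-verified Lean document; each statement's English description precedes it below -/
import Mathlib

section
/- Let G be the group with presentation ⟨a, b, t | t a t⁻¹ = a b, t b t⁻¹ = b a b⟩ (the fundamental group of the figure-eight knot complement). The homomorphism ι : F₂ → G sending the free generators u, v to a, b respectively is injective; that is, the subgroup of G generated by a and b is free of rank 2 with free basis {a, b}. -/
/-- The relations `t a t⁻¹ = a b` and `t b t⁻¹ = b a b` of the figure-eight knot group,
with generators `a, b, t` encoded as `0, 1, 2 : Fin 3`. -/
def fig8Rels : Set (FreeGroup (Fin 3)) :=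
  {FreeGroup.of 2 * FreeGroup.of 0 * (FreeGroup.of 2)⁻¹ *
      (FreeGroup.of 0 * FreeGroup.of 1)⁻¹,
   FreeGroup.of 2 * FreeGroup.of 1 * (FreeGroup.of 2)⁻¹ *
      (FreeGroup.of 1 * FreeGroup.of 0 * FreeGroup.of 1)⁻¹}

/-- The fundamental group of the figure-eight knot complement,
`⟨a, b, t | t a t⁻¹ = a b, t b t⁻¹ = b a b⟩`. -/
abbrev Fig8 : Type := PresentedGroup fig8Rels

/-- The generator `a` of the figure-eight knot group. -/
def fig8a : Fig8 := PresentedGroup.of 0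

/-- The generator `b` of the figure-eight knot group. -/
def fig8b : Fig8 := PresentedGroup.of 1

/-- The generator `t` of the figure-eight knot group. -/
def fig8t : Fig8 := PresentedGroup.of 2

/-- The homomorphism `F₂ → G` sending the free generators `u, v` to `a, b`. -/
def fig8iota : FreeGroup (Fin 2) →* Fig8 := FreeGroup.lift ![fig8a, fig8b]

/-!
`G` is the mapping torus of the automorphism `φ : u ↦ uv, v ↦ vuv` of `F₂`: sending `a, b` to
`u, v` and `t` to the generator of `ℤ` defines a homomorphism `G → F₂ ⋊_φ ℤ`, because the
relations of `G` say precisely that `t` acts on `a, b` by `φ`. Its composite with `ι` is the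
inclusion of the fibre `F₂`, which is injective, hence so is `ι`.
-/

namespace Fig8

def lift {H : Type*} [Group H] (x y s : H) (hx : s * x * s⁻¹ = x * y)
    (hy : s * y * s⁻¹ = y * x * y) : Fig8 →* H :=
  PresentedGroup.toGroup (f := ![x, y, s]) <| by
    rintro r (rfl | rfl) <;>
      simp only [map_mul, map_inv, FreeGroup.lift_apply_of, mul_inv_eq_one] <;>
      assumption

theorem lift_comp_fig8iota {H : Type*} [Group H] (x y s : H) (hx : s * x * s⁻¹ = x * y)
    (hy : s * y * s⁻¹ = y * x * y) :
    (lift x y s hx hy).comp fig8iota = FreeGroup.lift ![x, y] := by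
  ext i
  fin_cases i <;> simp [lift, fig8iota, fig8a, fig8b, PresentedGroup.toGroup.of]

end Fig8

namespace FreeGroup

def fig8Monodromy : MulAut (FreeGroup (Fin 2)) :=
  MonoidHom.toMulEquiv (lift ![of 0 * of 1, of 1 * of 0 * of 1])
    (lift ![of 0 * of 0 * (of 1)⁻¹, of 1 * (of 0)⁻¹])
    (by ext i; fin_cases i <;> simp [mul_assoc])
    (by ext i; fin_cases i <;> simp [mul_assoc])

theorem fig8Monodromy_of_zero : fig8Monodromy (of 0) = of 0 * of 1 := by
  simp [fig8Monodromy]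

theorem fig8Monodromy_of_one : fig8Monodromy (of 1) = of 1 * of 0 * of 1 := by
  simp [fig8Monodromy]

end FreeGroup

theorem SemidirectProduct.inr_ofAdd_one_conj_inl {N : Type*} [Group N] (e : MulAut N) (n : N) :
    (inr (Multiplicative.ofAdd 1) * inl n * (inr (Multiplicative.ofAdd 1))⁻¹ :
      N ⋊[zpowersHom _ e] Multiplicative ℤ) = inl (e n) := by
  rw [← map_inv inr, ← inl_aut, zpowersHom_apply, toAdd_ofAdd, zpow_one]

open FreeGroup SemidirectProduct in
/-- The subgroup of the figure-eight knot group generated by `a` and `b` is free of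
rank 2 with free basis `{a, b}`: the homomorphism `F₂ → G`, `u ↦ a`, `v ↦ b` is
injective. -/
theorem fig8_fiber_subgroup_free : Function.Injective fig8iota := by
  let π := Fig8.lift (H := FreeGroup (Fin 2) ⋊[zpowersHom _ fig8Monodromy] Multiplicative ℤ)
    (inl (of 0)) (inl (of 1)) (inr (Multiplicative.ofAdd 1))
    (by rw [inr_ofAdd_one_conj_inl, fig8Monodromy_of_zero, _root_.map_mul])
    (by rw [inr_ofAdd_one_conj_inl, fig8Monodromy_of_one, _root_.map_mul, _root_.map_mul])
  have hπ : π.comp fig8iota = inl := by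
    rw [Fig8.lift_comp_fig8iota]
    refine FreeGroup.ext_hom _ _ fun i => ?_
    fin_cases i <;> rfl
  refine Function.Injective.of_comp (f := π) ?_
  rw [← MonoidHom.coe_comp, hπ]
  exact inl_injective
end

section
/- Let G be the group with presentation ⟨a, b, t | t a t⁻¹ = a b, t b t⁻¹ = b a b⟩ and let ι : F₂ → G be the homomorphism sending the free generators u, v to a, b respectively. Then ι is not a quasi-isometric embedding with respect to the word metric of the basis {u, v} on F₂ and the word metric of the generating set {a, b, t} on G. -/
/-- The word length of `g` with respect to a generating set `S`: the minimal length of a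
word in the elements of `S` and their inverses representing `g`. -/
noncomputable def wordLength {G : Type*} [Group G] (S : Set G) (g : G) : ℕ :=
  sInf {n | ∃ l : List G, l.length = n ∧ (∀ x ∈ l, x ∈ S ∨ x⁻¹ ∈ S) ∧ l.prod = g}

/-!
Conjugation by `t` maps the fiber `⟨a, b⟩` to itself, acting as the substitution
`σ : u ↦ uv, v ↦ vuv`. Hence `t^n a t^{-n}`, of length at most `2n + 1` in `G`, is the image of
`σⁿ(u)`. The homomorphism `F₂ → ℝ` with `u ↦ 1, v ↦ φ` (`φ` the golden ratio) satisfies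
`χ ∘ σ = φ² χ`, because `(1, φ)` is an eigenvector of the abelianized substitution, and
`|χ w| ≤ φ |w|`; so `|σⁿ(u)| ≥ φ^(2n-1)`. Exponential length in `F₂` against linear length in `G`
contradicts any quasi-isometric lower bound.
-/

open Multiplicative Filter Asymptotics Real goldenRatio

lemma FreeGroup.abs_toAdd_le_mul_norm {α : Type*} [DecidableEq α]
    (χ : FreeGroup α →* Multiplicative ℝ) {C : ℝ} (hχ : ∀ a, |toAdd (χ (of a))| ≤ C)
    (w : FreeGroup α) : |toAdd (χ w)| ≤ C * w.norm := by
  have hletter : ∀ x : α × Bool, |toAdd (χ (mk [x]))| ≤ C := by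
    rintro ⟨a, _ | _⟩
    · rw [show mk [(a, false)] = (of a)⁻¹ from rfl, _root_.map_inv, toAdd_inv, abs_neg]
      exact hχ a
    · exact hχ a
  suffices ∀ L : List (α × Bool), |toAdd (χ (mk L))| ≤ C * L.length by
    simpa [FreeGroup.norm, FreeGroup.mk_toWord] using this w.toWord
  intro L
  induction L with
  | nil => simp [← FreeGroup.one_eq_mk]
  | cons x L ih =>
    rw [← List.singleton_append, ← FreeGroup.mul_mk, _root_.map_mul, toAdd_mul]
    calc _ ≤ |toAdd (χ (mk [x]))| + |toAdd (χ (mk L))| := abs_add_le _ _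
      _ ≤ C * ([x] ++ L).length := by
        simpa [mul_add, add_comm] using add_le_add (hletter x) ih

lemma wordLength_list_prod_le {G : Type*} [Group G] {S : Set G} {l : List G}
    (hl : ∀ x ∈ l, x ∈ S ∨ x⁻¹ ∈ S) : wordLength S l.prod ≤ l.length :=
  Nat.sInf_le ⟨l, rfl, hl, rfl⟩

lemma wordLength_pow_mul_pow_inv_le {G : Type*} [Group G] {S : Set G} {g s : G}
    (hg : g ∈ S) (hs : s ∈ S) (n : ℕ) : wordLength S (g ^ n * s * (g ^ n)⁻¹) ≤ 2 * n + 1 := by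
  have := wordLength_list_prod_le (S := S)
    (l := List.replicate n g ++ s :: List.replicate n g⁻¹) (by aesop)
  simpa [List.prod_replicate, inv_pow, mul_assoc, two_mul, add_assoc] using this

lemma exists_mul_add_lt_pow {r : ℝ} (hr : 1 < r) (A B : ℝ) : ∃ n : ℕ, A * n + B < r ^ n := by
  have hlin : (fun n : ℕ ↦ A * n + B) =o[atTop] fun n ↦ r ^ n :=
    ((isLittleO_coe_const_pow_of_one_lt hr).const_mul_left A).add <| isLittleO_const_left.2 <|
      .inr <| tendsto_norm_atTop_atTop.comp (tendsto_pow_atTop_atTop_of_one_lt hr)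
  obtain ⟨n, hn⟩ := (hlin.def one_half_pos).exists
  have hpos : 0 < r ^ n := pow_pos (zero_lt_one.trans hr) n
  rw [Real.norm_eq_abs, Real.norm_of_nonneg hpos.le] at hn
  exact ⟨n, by linarith [le_abs_self (A * n + B)]⟩

lemma fig8t_conj_a : fig8t * fig8a * fig8t⁻¹ = fig8a * fig8b :=
  PresentedGroup.mk_eq_mk_of_mul_inv_mem (Or.inl rfl)

lemma fig8t_conj_b : fig8t * fig8b * fig8t⁻¹ = fig8b * fig8a * fig8b :=
  PresentedGroup.mk_eq_mk_of_mul_inv_mem (Or.inr rfl)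

def fig8Monodromy : FreeGroup (Fin 2) →* FreeGroup (Fin 2) :=
  FreeGroup.lift ![.of 0 * .of 1, .of 1 * .of 0 * .of 1]

lemma fig8iota_comp_monodromy :
    fig8iota.comp fig8Monodromy = (MulAut.conj fig8t).toMonoidHom.comp fig8iota := by
  ext i
  fin_cases i
  · simpa [fig8Monodromy, fig8iota] using fig8t_conj_a.symm
  · simpa [fig8Monodromy, fig8iota] using fig8t_conj_b.symm

lemma fig8iota_monodromy_iterate (n : ℕ) (w : FreeGroup (Fin 2)) :
    fig8iota (fig8Monodromy^[n] w) = fig8t ^ n * fig8iota w * (fig8t ^ n)⁻¹ := by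
  induction n with
  | zero => simp
  | succ n ih =>
    rw [Function.iterate_succ_apply', ← MonoidHom.comp_apply, fig8iota_comp_monodromy]
    simp [ih, pow_succ', mul_assoc]

noncomputable def goldenWeight : FreeGroup (Fin 2) →* Multiplicative ℝ :=
  FreeGroup.lift ![ofAdd 1, ofAdd φ]

lemma goldenWeight_monodromy (w : FreeGroup (Fin 2)) :
    toAdd (goldenWeight (fig8Monodromy w)) = φ ^ 2 * toAdd (goldenWeight w) := by
  have : goldenWeight.comp fig8Monodromy =
      (AddMonoidHom.mulLeft (φ ^ 2)).toMultiplicative.comp goldenWeight := by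
    ext i
    fin_cases i
    · simp [goldenWeight, fig8Monodromy, add_comm]
    · have hcube : φ + 1 + φ = φ ^ 2 * φ := by linear_combination -(φ + 1) * goldenRatio_sq
      simpa [goldenWeight, fig8Monodromy] using hcube
  exact congrArg toAdd (DFunLike.congr_fun this w)

lemma goldenWeight_monodromy_iterate_of_zero (n : ℕ) :
    toAdd (goldenWeight (fig8Monodromy^[n] (.of 0))) = (φ ^ 2) ^ n := by
  induction n with
  | zero => simp [goldenWeight]
  | succ n ih => rw [Function.iterate_succ_apply', goldenWeight_monodromy, ih, ← pow_succ']

lemma wordLength_fig8iota_monodromy_iterate_le (n : ℕ) :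
    wordLength {fig8a, fig8b, fig8t} (fig8iota (fig8Monodromy^[n] (.of 0))) ≤ 2 * n + 1 := by
  rw [fig8iota_monodromy_iterate]
  exact wordLength_pow_mul_pow_inv_le (by simp) (by simp [fig8iota]) n

lemma goldenRatio_sq_pow_le_mul_norm_monodromy_iterate (n : ℕ) :
    (φ ^ 2) ^ n ≤ φ * (fig8Monodromy^[n] (.of 0)).norm := by
  rw [← goldenWeight_monodromy_iterate_of_zero]
  refine (le_abs_self _).trans (FreeGroup.abs_toAdd_le_mul_norm _ (fun i ↦ ?_) _)
  fin_cases i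
  · simpa [goldenWeight] using one_lt_goldenRatio.le
  · simp [goldenWeight, abs_of_pos goldenRatio_pos]

/-- The inclusion of the fiber free subgroup `⟨a, b⟩` in the figure-eight knot group
is not a quasi-isometric embedding. -/
theorem fig8_not_qi_embedding :
    ¬ ∃ lam eps : ℝ, 1 ≤ lam ∧ 0 ≤ eps ∧
      ∀ p q : FreeGroup (Fin 2),
        (1 / lam) * ((p⁻¹ * q).toWord.length : ℝ) - eps ≤
            (wordLength ({fig8a, fig8b, fig8t} : Set Fig8)
              ((fig8iota p)⁻¹ * fig8iota q) : ℝ) ∧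
        (wordLength ({fig8a, fig8b, fig8t} : Set Fig8)
            ((fig8iota p)⁻¹ * fig8iota q) : ℝ) ≤
          lam * ((p⁻¹ * q).toWord.length : ℝ) + eps := by
  rintro ⟨lam, eps, hlam, -, hqi⟩
  have hlam_pos : 0 < lam := zero_lt_one.trans_le hlam
  obtain ⟨n, hn⟩ := exists_mul_add_lt_pow (one_lt_pow₀ one_lt_goldenRatio two_ne_zero)
    (2 * φ * lam) (φ * lam * (1 + eps))
  set w := fig8Monodromy^[n] (.of 0)
  have hlower := (hqi 1 w).1
  rw [inv_one, one_mul, map_one, inv_one, one_mul, one_div_mul_eq_div] at hlower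
  have hwl : (wordLength {fig8a, fig8b, fig8t} (fig8iota w) : ℝ) ≤ 2 * n + 1 := by
    exact_mod_cast wordLength_fig8iota_monodromy_iterate_le n
  have hlen : (w.norm : ℝ) ≤ lam * (2 * n + 1 + eps) :=
    (div_le_iff₀' hlam_pos).1 (by unfold FreeGroup.norm; linarith)
  have hgrowth := goldenRatio_sq_pow_le_mul_norm_monodromy_iterate n
  linarith [mul_le_mul_of_nonneg_left hlen goldenRatio_pos.le]
end
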